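/- Let (M,d,μ) be a metric measure space with 0 < μ(B(x;R)) < ∞ for all x ∈ M, R > 0, and let p : M × M × (0,∞) → [0,∞) be a measurable symmetric kernel satisfying the semigroup property, stochastic completeness ∫_M p(x,y;t) dμ(y) = 1, and, for some constant C ∈ [2,∞), the two-sided Li–Yau Gaussian bound C^{-1} e^{-C d(x,y)²/t} (μ(B(x;t^{1/2})) μ(B(y;t^{1/2})))^{-1/2} ≤ p(x,y;t) ≤ C e^{-d(x,y)²/(Ct)} (μ(B(x;t^{1/2})) μ(B(y;t^{1/2})))^{-1/2}, together with volume doubling μ(B(x;2R)) ≤ C μ(B(x;R)). Let Ω ⊆ M be open with μ(Ω) < ∞, and define the heat loss F_Ω(t) = μ(Ω) − H_Ω(t), where H_Ω(t) = ∫_Ω ∫_Ω p(x,y;t) dμ(y) dμ(x), and ν_Ω(x;R) = μ(B(x;R) \ Ω). Then for all t > 0, L₁ ∫_Ω ν_Ω(x;t^{1/2}) / μ(B(x;t^{1/2})) dμ(x) ≤ F_Ω(t) ≤ L₂ ∫_Ω ν_Ω(x;t^{1/2}) / μ(B(x;t^{1/2})) dμ(x), where L₁ = C^{-2} e^{-C}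 and L₂ = 4 C^{15/4} ( C · log( 2 C^{7 + (log C)/(log 2)} ) )^{1 + (3 log C)/(4 log 2)}. -/

import Mathlib

open MeasureTheory Metric ENNReal

/-!
By stochastic completeness the heat loss is the mass `∫_Ω ∫_{Ωᶜ} p(x,y;t)` that leaves `Ω`.
The lower bound is pointwise: for `y ∈ B(x;√t) \ Ω` the Li–Yau lower bound and doubling give
`p(x,y;t) ≥ C⁻² e^{-C} / μ(B(x;√t))`.

For the upper bound, Chapman–Kolmogorov makes the heat loss subadditive in time, so
`F_Ω(t) ≤ n F_Ω(t/n)`. At time `s = t/n` the Li–Yau upper bound and doubling bound the kernel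
on `B(x;√t)` by a multiple of `1/μ(B(x;√t))`, which gives the main term. On the dyadic annulus
`2^j √t ≤ d(x,y) < 2^{j+1} √t` the Gaussian factor is at most `e^{-4^j n/C}`, and the Li–Yau
lower bound at the larger time `T_j = ⌈C⌉ 4^{j+1} t` compares `p(x,y;s)` with `p(x,y;T_j)`;
subadditivity once more gives `F_Ω(T_j) ≤ ⌈C⌉ 4^{j+1} F_Ω(t)`. For
`n ≈ 3 C log(2 C^{7 + log₂ C})` the annular contributions add up to at most `F_Ω(t)/2`, which
is absorbed into the left-hand side.
-/

lemma ENNReal.rpow_neg_half_le_sqrt_mul {u v : ℝ≥0∞} {k : ℝ} (hk : 0 < k)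
    (h : u ≤ ENNReal.ofReal k * v) :
    v ^ (-(1 : ℝ) / 2) ≤ ENNReal.ofReal (√k) * u ^ (-(1 : ℝ) / 2) := by
  have hk0 : ENNReal.ofReal k ≠ 0 := (ENNReal.ofReal_pos.2 hk).ne'
  have hkt : ENNReal.ofReal k ≠ ⊤ := ENNReal.ofReal_ne_top
  have hanti : (ENNReal.ofReal k * v) ^ (-(1 : ℝ) / 2) ≤ u ^ (-(1 : ℝ) / 2) := by
    rw [neg_div, ENNReal.rpow_neg, ENNReal.rpow_neg]
    exact ENNReal.inv_le_inv.2 (ENNReal.rpow_le_rpow h (by norm_num))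
  have hsplit : (ENNReal.ofReal k * v) ^ (-(1 : ℝ) / 2)
      = ENNReal.ofReal k ^ (-(1 : ℝ) / 2) * v ^ (-(1 : ℝ) / 2) := by
    simp [ENNReal.mul_rpow_eq_ite, hk0, hkt]
  have hsqrt : ENNReal.ofReal (√k) = ENNReal.ofReal k ^ ((1 : ℝ) / 2) := by
    rw [Real.sqrt_eq_rpow, ENNReal.ofReal_rpow_of_nonneg hk.le (by norm_num)]
  calc v ^ (-(1 : ℝ) / 2)
      = ENNReal.ofReal k ^ ((1 : ℝ) / 2) * (ENNReal.ofReal k * v) ^ (-(1 : ℝ) / 2) := by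
        rw [hsplit, ← mul_assoc, ← ENNReal.rpow_add _ _ hk0 hkt]
        norm_num
    _ ≤ ENNReal.ofReal (√k) * u ^ (-(1 : ℝ) / 2) := by
        rw [hsqrt]; gcongr

lemma ENNReal.sq_rpow_neg_half (w : ℝ≥0∞) : (w ^ 2) ^ (-(1 : ℝ) / 2) = w⁻¹ := by
  rw [← ENNReal.rpow_two, ← ENNReal.rpow_mul, ← ENNReal.rpow_neg_one]
  norm_num

lemma ENNReal.le_two_mul_of_le_add_half {a b : ℝ≥0∞} (ha : a ≠ ⊤) (h : a ≤ b + 2⁻¹ * a) :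
    a ≤ 2 * b := by
  have hhalf : 2⁻¹ * a ≠ ⊤ := ENNReal.mul_ne_top (by norm_num) ha
  have h' : 2⁻¹ * a + 2⁻¹ * a ≤ b + 2⁻¹ * a := by
    rwa [← add_mul, ENNReal.inv_two_add_inv_two, one_mul]
  calc a = 2 * (2⁻¹ * a) := by
        rw [← mul_assoc, ENNReal.mul_inv_cancel two_ne_zero ENNReal.ofNat_ne_top, one_mul]
    _ ≤ 2 * b := by gcongr; exact ENNReal.le_of_add_le_add_right hhalf h'

lemma Real.sqrt_le_two_pow_mul_sqrt {T s : ℝ} {q : ℕ} (h : T ≤ 4 ^ q * s) :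
    √T ≤ 2 ^ q * √s := by
  calc √T ≤ √(4 ^ q * s) := Real.sqrt_le_sqrt h
    _ = 2 ^ q * √s := by
        rw [Real.sqrt_mul (by positivity), show (4 : ℝ) ^ q = (2 ^ q) ^ 2 by
          rw [← pow_mul, mul_comm, pow_mul]; norm_num, Real.sqrt_sq (by positivity)]

lemma log_two_bounds : 0.6931471 < Real.log 2 ∧ Real.log 2 < 0.6931472 :=
  ⟨lt_trans (by norm_num) Real.log_two_gt_d9, lt_trans Real.log_two_lt_d9 (by norm_num)⟩

lemma exists_le_four_pow {k : ℝ} (hk : 1 ≤ k) :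
    ∃ m : ℕ, k ≤ 4 ^ m ∧ (m : ℝ) ≤ Real.log k / (2 * Real.log 2) + 1 := by
  obtain ⟨j, hj, hj'⟩ := exists_nat_pow_near hk (by norm_num : (1 : ℝ) < 4)
  have hL : 0 < 2 * Real.log 2 := by linarith [log_two_bounds.1]
  have hlog : (j : ℝ) * (2 * Real.log 2) ≤ Real.log k :=
    calc (j : ℝ) * (2 * Real.log 2) = Real.log (4 ^ j) := by
          rw [Real.log_pow, show (4 : ℝ) = 2 ^ 2 by norm_num, Real.log_pow]; push_cast; ring
      _ ≤ Real.log k := Real.log_le_log (by positivity) hj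
  refine ⟨j + 1, hj'.le, ?_⟩
  push_cast
  linarith [(le_div_iff₀ hL).2 hlog]

noncomputable def liYauScale (C : ℝ) : ℝ :=
  C * Real.log (2 * C ^ ((7 : ℝ) + Real.log C / Real.log 2))

noncomputable def heatLossUpperConstant (C : ℝ) : ℝ :=
  4 * C ^ ((15 : ℝ) / 4) * liYauScale C ^ (1 + 3 * Real.log C / (4 * Real.log 2))

lemma liYauScale_eq {C : ℝ} (hC : 0 < C) :
    liYauScale C = C * (Real.log 2 + 7 * Real.log C + Real.log C ^ 2 / Real.log 2) := by
  rw [liYauScale, Real.log_mul two_ne_zero (Real.rpow_pos_of_pos hC _).ne', Real.log_rpow hC]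
  ring

lemma eight_le_liYauScale {C : ℝ} (hC : 2 ≤ C) : 8 ≤ liYauScale C := by
  have hL := log_two_bounds
  have hx : Real.log 2 ≤ Real.log C := Real.log_le_log two_pos hC
  have hsq : Real.log 2 ≤ Real.log C ^ 2 / Real.log 2 := by
    rw [le_div_iff₀ (by linarith)]; nlinarith
  rw [liYauScale_eq (by linarith)]
  nlinarith

lemma three_mul_liYauScale_add_one_le {C : ℝ} (hC : 2 ≤ C) :
    3 * liYauScale C + 1 ≤ 20 * C ^ 3 := by
  have hL := log_two_bounds
  have hx0 : 0 ≤ Real.log C := Real.log_nonneg (by linarith)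
  have hx : Real.log C ≤ C - 1 := Real.log_le_sub_one_of_pos (by linarith)
  have hsq : Real.log C ^ 2 / Real.log 2 ≤ 1.45 * C ^ 2 := by
    rw [div_le_iff₀ (by linarith)]; nlinarith
  have hW : liYauScale C ≤ C * (0.7 + 7 * C + 1.45 * C ^ 2) := by
    rw [liYauScale_eq (by linarith)]
    exact mul_le_mul_of_nonneg_left (by linarith) (by linarith)
  nlinarith

lemma log_le_of_le_three_mul_liYauScale_add_one {C ν : ℝ} (hC : 2 ≤ C) (hν0 : 0 < ν)
    (hν : ν ≤ 3 * liYauScale C + 1) : Real.log ν ≤ 3 + 3 * Real.log C := by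
  have he3 : 20 ≤ Real.exp 3 := by
    rw [show (3 : ℝ) = (3 : ℕ) * 1 by norm_num, Real.exp_nat_mul]
    calc (20 : ℝ) ≤ 2.7182818283 ^ 3 := by norm_num
      _ ≤ Real.exp 1 ^ 3 := pow_le_pow_left₀ (by norm_num) Real.exp_one_gt_d9.le 3
  have hνC : ν ≤ Real.exp 3 * C ^ 3 := by
    nlinarith [three_mul_liYauScale_add_one_le hC, pow_pos (by linarith : (0 : ℝ) < C) 3]
  calc Real.log ν ≤ Real.log (Real.exp 3 * C ^ 3) := Real.log_le_log hν0 hνC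
    _ = 3 + 3 * Real.log C := by
        rw [Real.log_mul (Real.exp_pos _).ne' (by positivity), Real.log_exp, Real.log_pow]
        push_cast; ring

lemma four_mul_exp_neg_le_half {C ν : ℝ} (hC : 2 ≤ C) (hν : 3 * liYauScale C ≤ ν) :
    4 * C * Real.exp (-(ν / C)) ≤ 1 / 2 := by
  have hL := log_two_bounds
  have hC0 : 0 < C := by linarith
  have hx : Real.log 2 ≤ Real.log C := Real.log_le_log two_pos hC
  have hlog : Real.log (8 * C) ≤ ν / C := by
    have hsq : 0 ≤ Real.log C ^ 2 / Real.log 2 := by positivity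
    rw [Real.log_mul (by norm_num) hC0.ne', show (8 : ℝ) = 2 ^ 3 by norm_num, Real.log_pow,
      le_div_iff₀ hC0]
    rw [liYauScale_eq hC0] at hν
    push_cast
    nlinarith
  have h8 : 8 * C ≤ Real.exp (ν / C) := by
    rw [← Real.exp_log (by positivity : (0 : ℝ) < 8 * C)]; exact Real.exp_le_exp.2 hlog
  rw [Real.exp_neg, ← div_eq_mul_inv, div_le_iff₀ (Real.exp_pos _)]
  linarith

lemma annulus_coeff_le_geometric {C ν K : ℝ} (hC : 0 < C) (hK : K ≤ 3 / 2 * C) (hν : 0 ≤ ν)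
    (hρ : 4 * C * Real.exp (-(ν / C)) ≤ 1 / 2) (m j : ℕ) :
    C ^ (j + 3 + m) * Real.exp 1 * Real.exp (-(4 ^ j * ν / C)) * (K * 4 ^ (j + 1))
      ≤ 6 * Real.exp 1 * C ^ (4 + m) * Real.exp (-(ν / C)) * (1 / 2) ^ j := by
  have h4 : (j : ℝ) + 1 ≤ 4 ^ j := by
    have := one_add_mul_le_pow (show (-2 : ℝ) ≤ 3 by norm_num) j
    norm_num at this
    linarith [(by positivity : (0 : ℝ) ≤ j)]
  have hexp : Real.exp (-(4 ^ j * ν / C)) ≤ Real.exp (-(ν / C)) * Real.exp (-(ν / C)) ^ j := by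
    rw [← Real.exp_nat_mul, ← Real.exp_add, Real.exp_le_exp]
    have : ((j : ℝ) + 1) * ν / C ≤ 4 ^ j * ν / C := by gcongr
    linarith [show ((j : ℝ) + 1) * ν / C = ν / C + j * (ν / C) by ring]
  calc C ^ (j + 3 + m) * Real.exp 1 * Real.exp (-(4 ^ j * ν / C)) * (K * 4 ^ (j + 1))
      = (4 * Real.exp 1 * C ^ (3 + m) * K) * ((4 * C) ^ j * Real.exp (-(4 ^ j * ν / C))) := by
        rw [show j + 3 + m = j + (3 + m) by ring, pow_add, pow_succ, mul_pow]
        ring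
    _ ≤ (4 * Real.exp 1 * C ^ (3 + m) * (3 / 2 * C)) *
          ((4 * C) ^ j * (Real.exp (-(ν / C)) * Real.exp (-(ν / C)) ^ j)) := by gcongr
    _ = (6 * Real.exp 1 * C ^ (4 + m) * Real.exp (-(ν / C))) *
          (4 * C * Real.exp (-(ν / C))) ^ j := by
        rw [show 4 + m = 3 + m + 1 by ring, pow_succ, mul_pow (4 * C)]
        ring
    _ ≤ 6 * Real.exp 1 * C ^ (4 + m) * Real.exp (-(ν / C)) * (1 / 2) ^ j := by gcongr

lemma twelve_mul_exp_neg_le_half {C ν : ℝ} {m : ℕ} (hC : 2 ≤ C)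
    (hν : 3 * liYauScale C ≤ ν) (hν' : ν ≤ 3 * liYauScale C + 1)
    (hm : (m : ℝ) ≤ Real.log (3 / 2 * C * ν) / (2 * Real.log 2) + 1) :
    12 * Real.exp 1 * ν * C ^ (4 + m) * Real.exp (-(ν / C)) ≤ 1 / 2 := by
  have hL := log_two_bounds
  have hC0 : 0 < C := by linarith
  have hν0 : 0 < ν := lt_of_lt_of_le (by linarith [eight_le_liYauScale hC]) hν
  have hlogν := log_le_of_le_three_mul_liYauScale_add_one hC hν0 hν'
  set x := Real.log C
  set L := Real.log 2
  have hxL : L ≤ x := Real.log_le_log two_pos hC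
  set y := x / L
  have hxy : x = y * L := (div_mul_cancel₀ x (by linarith : L ≠ 0)).symm
  have hy1 : 1 ≤ y := (one_le_div (by linarith)).2 hxL
  have hνC : 3 * (L + 7 * x + x * y) ≤ ν / C := by
    rw [le_div_iff₀ hC0]
    rw [liYauScale_eq hC0] at hν
    have : x ^ 2 / L = x * y := by simp only [y]; ring
    nlinarith
  have hmx : m * x ≤ x + y / 2 * (L + x + Real.log ν) := by
    have hlog : Real.log (3 / 2 * C * ν) ≤ L + x + Real.log ν := by
      rw [Real.log_mul (by positivity) hν0.ne', Real.log_mul (by norm_num) hC0.ne']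
      linarith [Real.log_le_log (by norm_num : (0 : ℝ) < 3 / 2) (by norm_num : (3 / 2 : ℝ) ≤ 2)]
    calc (m : ℝ) * x ≤ (Real.log (3 / 2 * C * ν) / (2 * L) + 1) * x :=
          mul_le_mul_of_nonneg_right hm (by linarith)
      _ = x + y / 2 * Real.log (3 / 2 * C * ν) := by simp only [y]; field_simp; ring
      _ ≤ x + y / 2 * (L + x + Real.log ν) := by gcongr
  have hlog12 : Real.log 12 ≤ 4 * L := by
    rw [show 4 * L = Real.log (2 ^ 4) by rw [Real.log_pow]; push_cast; ring]
    exact Real.log_le_log (by norm_num) (by norm_num)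
  have hyν : y / 2 * Real.log ν ≤ y / 2 * (3 + 3 * x) := by gcongr
  have hkey : Real.log 12 + 1 + Real.log ν + (4 + m) * x + L ≤ ν / C := by nlinarith
  have hpow : Real.exp ((4 + m) * x) = C ^ (4 + m) := by
    rw [show ((4 : ℝ) + m) * x = ((4 + m : ℕ) : ℝ) * x by push_cast; ring, Real.exp_nat_mul,
      Real.exp_log hC0]
  calc 12 * Real.exp 1 * ν * C ^ (4 + m) * Real.exp (-(ν / C))
      = Real.exp (Real.log 12 + 1 + Real.log ν + (4 + m) * x - ν / C) := by
        rw [Real.exp_sub, Real.exp_add, Real.exp_add, Real.exp_add, Real.exp_log (by norm_num),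
          Real.exp_log hν0, hpow, Real.exp_neg]
        ring
    _ ≤ Real.exp (-L) := Real.exp_le_exp.2 (by linarith)
    _ = 1 / 2 := by rw [Real.exp_neg, Real.exp_log two_pos, one_div]

lemma two_mul_le_heatLossUpperConstant {C ν : ℝ} {m : ℕ} (hC : 2 ≤ C) (hν0 : 0 < ν)
    (hν : ν ≤ 3 * liYauScale C + 1) (hm : (m : ℝ) ≤ Real.log ν / (2 * Real.log 2) + 1) :
    2 * ν * (C ^ m * (C * √C)) ≤ heatLossUpperConstant C := by
  have hL := log_two_bounds
  have hC0 : 0 < C := by linarith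
  set x := Real.log C
  set L := Real.log 2
  have hxL : L ≤ x := Real.log_le_log two_pos hC
  set y := x / L
  have hxy : x = y * L := (div_mul_cancel₀ x (by linarith : L ≠ 0)).symm
  have hy1 : 1 ≤ y := (one_le_div (by linarith)).2 hxL
  set W := liYauScale C
  have hW8 : 8 ≤ W := eight_le_liYauScale hC
  have hW0 : 0 < W := by linarith
  have hlogW : 3 * L ≤ Real.log W := by
    rw [show 3 * L = Real.log (2 ^ 3) by rw [Real.log_pow]; push_cast; ring]
    exact Real.log_le_log (by norm_num) (by norm_num; linarith)
  have hlogν : Real.log ν ≤ 2 * L + Real.log W := by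
    rw [show 2 * L = Real.log (2 ^ 2) by rw [Real.log_pow]; push_cast; ring,
      ← Real.log_mul (by norm_num) hW0.ne']
    exact Real.log_le_log hν0 (by linarith)
  have hmx : m * x ≤ x + y / 2 * Real.log ν :=
    calc (m : ℝ) * x ≤ (Real.log ν / (2 * L) + 1) * x :=
          mul_le_mul_of_nonneg_right hm (by linarith)
      _ = x + y / 2 * Real.log ν := by simp only [y]; field_simp; ring
  have hyν : y / 2 * Real.log ν ≤ y / 2 * (2 * L + Real.log W) := by gcongr
  have hyW : 3 * L ≤ y * Real.log W := by nlinarith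
  have hlogLHS :
      Real.log (2 * ν * (C ^ m * (C * √C))) = L + Real.log ν + m * x + x + x / 2 := by
    rw [Real.log_mul (by positivity) (by positivity), Real.log_mul (by norm_num) hν0.ne',
      Real.log_mul (by positivity) (by positivity), Real.log_pow,
      Real.log_mul hC0.ne' (by positivity), Real.log_sqrt hC0.le]
    ring
  have hlogRHS : Real.log (heatLossUpperConstant C)
      = 2 * L + 15 / 4 * x + (1 + 3 / 4 * y) * Real.log W := by
    rw [heatLossUpperConstant, Real.log_mul (by positivity) (by positivity),
      Real.log_mul (by norm_num) (by positivity), Real.log_rpow hC0, Real.log_rpow hW0,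
      show (4 : ℝ) = 2 ^ 2 by norm_num, Real.log_pow]
    simp only [y]
    push_cast
    ring
  rw [← Real.log_le_log_iff (by positivity) (by rw [heatLossUpperConstant]; positivity),
    hlogLHS, hlogRHS]
  nlinarith

lemma compl_ball_subset_iUnion_annulus {M : Type*} [MetricSpace M] (x : M) {r : ℝ}
    (hr : 0 < r) : (ball x r)ᶜ ⊆ ⋃ j : ℕ, ball x (2 ^ (j + 1) * r) \ ball x (2 ^ j * r) := by
  intro y hy
  obtain ⟨j, hj, hj'⟩ :=
    exists_nat_pow_near ((one_le_div hr).2 (not_lt.1 hy)) (one_lt_two : (1 : ℝ) < 2)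
  exact Set.mem_iUnion.2 ⟨j, mem_ball.2 ((div_lt_iff₀ hr).1 hj'),
    fun h => (mem_ball.1 h).not_ge ((le_div_iff₀ hr).1 hj)⟩

section Doubling

variable {M : Type*} [MetricSpace M] [MeasurableSpace M]

def VolumeDoubling (μ : Measure M) (C : ℝ) : Prop :=
  ∀ x : M, ∀ R : ℝ, 0 < R → μ (ball x (2 * R)) ≤ ENNReal.ofReal C * μ (ball x R)

lemma sigmaFinite_of_measure_ball_lt_top {μ : Measure M}
    (h : ∀ x : M, ∀ R : ℝ, 0 < R → μ (ball x R) < ⊤) : SigmaFinite μ := by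
  rcases isEmpty_or_nonempty M with hM | ⟨⟨x₀⟩⟩
  · infer_instance
  · refine Measure.sigmaFinite_of_countable (S := Set.range fun n : ℕ => ball x₀ (n + 1))
      (Set.countable_range _) (by rintro _ ⟨n, rfl⟩; exact h _ _ (by positivity)) ?_
    rw [Set.sUnion_range, Set.eq_univ_iff_forall]
    intro y
    obtain ⟨n, hn⟩ := exists_nat_gt (dist y x₀)
    exact Set.mem_iUnion.2 ⟨n, mem_ball.2 (by linarith)⟩

lemma VolumeDoubling.measure_ball_le {μ : Measure M} {C : ℝ} (hdbl : VolumeDoubling μ C)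
    (hC : 0 ≤ C) (x : M) {R R' : ℝ} (hR : 0 < R) (k : ℕ) (hR' : R' ≤ 2 ^ k * R) :
    μ (ball x R') ≤ ENNReal.ofReal (C ^ k) * μ (ball x R) := by
  induction k generalizing R' with
  | zero => simpa using measure_mono (ball_subset_ball (by simpa using hR'))
  | succ k ih =>
    calc μ (ball x R') ≤ μ (ball x (2 * (2 ^ k * R))) :=
          measure_mono (ball_subset_ball (by rw [pow_succ] at hR'; linarith))
      _ ≤ ENNReal.ofReal C * (ENNReal.ofReal (C ^ k) * μ (ball x R)) :=
          (hdbl x _ (by positivity)).trans (by gcongr; exact ih le_rfl)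
      _ = ENNReal.ofReal (C ^ (k + 1)) * μ (ball x R) := by
          rw [← mul_assoc, ← ENNReal.ofReal_mul hC, pow_succ, mul_comm C]

lemma VolumeDoubling.rpow_neg_half_le {μ : Measure M} {C : ℝ} (hdbl : VolumeDoubling μ C)
    (hC : 0 < C) {s T : ℝ} (hs : 0 < s) {q : ℕ} (hq : √T ≤ 2 ^ q * √s) (x y : M) :
    (μ (ball x √s) * μ (ball y √s)) ^ (-(1 : ℝ) / 2)
      ≤ ENNReal.ofReal (C ^ q) * (μ (ball x √T) * μ (ball y √T)) ^ (-(1 : ℝ) / 2) := by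
  have hs' : 0 < √s := Real.sqrt_pos.2 hs
  have h := ENNReal.rpow_neg_half_le_sqrt_mul (k := C ^ (2 * q)) (by positivity)
    (u := μ (ball x √T) * μ (ball y √T)) (v := μ (ball x √s) * μ (ball y √s)) <|
    calc μ (ball x √T) * μ (ball y √T)
        ≤ (ENNReal.ofReal (C ^ q) * μ (ball x √s)) * (ENNReal.ofReal (C ^ q) * μ (ball y √s)) :=
          mul_le_mul' (hdbl.measure_ball_le hC.le x hs' q hq)
            (hdbl.measure_ball_le hC.le y hs' q hq)
      _ = ENNReal.ofReal (C ^ (2 * q)) * (μ (ball x √s) * μ (ball y √s)) := by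
          rw [two_mul, pow_add, ENNReal.ofReal_mul (by positivity)]
          ring
  rwa [pow_mul', Real.sqrt_sq (by positivity)] at h

end Doubling

section LiYau

variable {M : Type*} [MetricSpace M] [MeasurableSpace M]

def LiYauLowerBound (μ : Measure M) (p : M → M → ℝ → ℝ≥0∞) (C : ℝ) : Prop :=
  ∀ x y : M, ∀ t : ℝ, 0 < t →
    ENNReal.ofReal (C⁻¹ * Real.exp (-(C * dist x y ^ 2) / t)) *
      (μ (ball x (Real.sqrt t)) * μ (ball y (Real.sqrt t))) ^ (-(1 : ℝ) / 2) ≤ p x y t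

def LiYauUpperBound (μ : Measure M) (p : M → M → ℝ → ℝ≥0∞) (C : ℝ) : Prop :=
  ∀ x y : M, ∀ t : ℝ, 0 < t →
    p x y t ≤ ENNReal.ofReal (C * Real.exp (-(dist x y ^ 2) / (C * t))) *
      (μ (ball x (Real.sqrt t)) * μ (ball y (Real.sqrt t))) ^ (-(1 : ℝ) / 2)

variable {μ : Measure M} {p : M → M → ℝ → ℝ≥0∞} {C : ℝ}

lemma LiYauLowerBound.div_measure_ball_le (hlow : LiYauLowerBound μ p C)
    (hdbl : VolumeDoubling μ C) (hC : 1 ≤ C) {t : ℝ} (ht : 0 < t) {x y : M}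
    (hxy : dist x y < √t) :
    ENNReal.ofReal (C ^ (-2 : ℝ) * Real.exp (-C)) / μ (ball x √t) ≤ p x y t := by
  have hC0 : 0 < C := by linarith
  set X := μ (ball x √t)
  set Y := μ (ball y √t)
  have hY : Y ≤ ENNReal.ofReal C * X :=
    (measure_mono (ball_subset_ball' (by rw [dist_comm]; linarith))).trans
      (hdbl x _ (Real.sqrt_pos.2 ht))
  have hvol : X⁻¹ ≤ ENNReal.ofReal √C * (X * Y) ^ (-(1 : ℝ) / 2) := by
    rw [← ENNReal.sq_rpow_neg_half]
    refine ENNReal.rpow_neg_half_le_sqrt_mul hC0 ?_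
    calc X * Y ≤ X * (ENNReal.ofReal C * X) := by gcongr
      _ = ENNReal.ofReal C * X ^ 2 := by ring
  have hgauss :
      C ^ (-2 : ℝ) * Real.exp (-C) * √C ≤ C⁻¹ * Real.exp (-(C * dist x y ^ 2) / t) := by
    have hd : dist x y ^ 2 ≤ t := by
      nlinarith [Real.sq_sqrt ht.le, dist_nonneg (x := x) (y := y)]
    have hexp : Real.exp (-C) ≤ Real.exp (-(C * dist x y ^ 2) / t) := by
      rw [Real.exp_le_exp, neg_div, neg_le_neg_iff, div_le_iff₀ ht]
      nlinarith
    have hpow : C ^ (-2 : ℝ) * √C ≤ C⁻¹ := by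
      rw [Real.rpow_neg hC0.le, Real.rpow_two, inv_mul_le_iff₀ (by positivity), sq,
        mul_assoc, mul_inv_cancel₀ hC0.ne', mul_one]
      nlinarith [Real.sqrt_le_sqrt hC, Real.sq_sqrt hC0.le, Real.sqrt_nonneg C]
    calc C ^ (-2 : ℝ) * Real.exp (-C) * √C = C ^ (-2 : ℝ) * √C * Real.exp (-C) := by ring
      _ ≤ _ := mul_le_mul hpow hexp (Real.exp_pos _).le (by positivity)
  calc ENNReal.ofReal (C ^ (-2 : ℝ) * Real.exp (-C)) / X
      = ENNReal.ofReal (C ^ (-2 : ℝ) * Real.exp (-C)) * X⁻¹ := div_eq_mul_inv _ _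
    _ ≤ ENNReal.ofReal (C ^ (-2 : ℝ) * Real.exp (-C)) *
          (ENNReal.ofReal √C * (X * Y) ^ (-(1 : ℝ) / 2)) := by gcongr
    _ = ENNReal.ofReal (C ^ (-2 : ℝ) * Real.exp (-C) * √C) * (X * Y) ^ (-(1 : ℝ) / 2) := by
        rw [← mul_assoc, ← ENNReal.ofReal_mul (by positivity)]
    _ ≤ p x y t := le_trans (by gcongr) (hlow x y t ht)

lemma LiYauLowerBound.rpow_neg_half_le (hlow : LiYauLowerBound μ p C) (hC : 0 < C) {T : ℝ}
    (hT : 0 < T) {x y : M} (hd : C * dist x y ^ 2 ≤ T) :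
    (μ (ball x √T) * μ (ball y √T)) ^ (-(1 : ℝ) / 2)
      ≤ ENNReal.ofReal (C * Real.exp 1) * p x y T := by
  have hgauss : Real.exp (-1) ≤ Real.exp (-(C * dist x y ^ 2) / T) := by
    rw [Real.exp_le_exp, neg_div, neg_le_neg_iff, div_le_one hT]
    exact hd
  calc (μ (ball x √T) * μ (ball y √T)) ^ (-(1 : ℝ) / 2)
      = ENNReal.ofReal (C * Real.exp 1) * (ENNReal.ofReal (C⁻¹ * Real.exp (-1)) *
          (μ (ball x √T) * μ (ball y √T)) ^ (-(1 : ℝ) / 2)) := by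
        rw [← mul_assoc, ← ENNReal.ofReal_mul (by positivity), Real.exp_neg,
          show C * Real.exp 1 * (C⁻¹ * (Real.exp 1)⁻¹) = 1 by field_simp,
          ENNReal.ofReal_one, one_mul]
    _ ≤ ENNReal.ofReal (C * Real.exp 1) * p x y T := by
        gcongr
        exact le_trans (by gcongr) (hlow x y T hT)

lemma LiYauUpperBound.le_div_measure_ball (hup : LiYauUpperBound μ p C)
    (hdbl : VolumeDoubling μ C) (hC : 0 < C) {s r : ℝ} (hs : 0 < s) {m : ℕ}
    (hr : r ≤ 2 ^ m * √s) {x y : M} (hxy : dist x y < r) :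
    p x y s ≤ ENNReal.ofReal (C ^ m * (C * √C)) / μ (ball x r) := by
  set X := μ (ball x r)
  set A := μ (ball x √s)
  set B := μ (ball y √s)
  have hs' : 0 < √s := Real.sqrt_pos.2 hs
  have hXA : X ≤ ENNReal.ofReal (C ^ m) * A := hdbl.measure_ball_le hC.le x hs' m hr
  have hsub : ball x r ⊆ ball y (2 * r) := ball_subset_ball' (by linarith [dist_comm x y])
  have hXB : X ≤ ENNReal.ofReal (C ^ (m + 1)) * B :=
    (measure_mono hsub).trans
      (hdbl.measure_ball_le hC.le y hs' (m + 1) (by rw [pow_succ]; linarith))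
  have hvol : (A * B) ^ (-(1 : ℝ) / 2) ≤ ENNReal.ofReal (√(C ^ (2 * m + 1))) * X⁻¹ := by
    rw [← ENNReal.sq_rpow_neg_half]
    refine ENNReal.rpow_neg_half_le_sqrt_mul (by positivity) ?_
    calc X ^ 2 = X * X := sq X
      _ ≤ (ENNReal.ofReal (C ^ m) * A) * (ENNReal.ofReal (C ^ (m + 1)) * B) :=
          mul_le_mul' hXA hXB
      _ = ENNReal.ofReal (C ^ (2 * m + 1)) * (A * B) := by
          rw [show C ^ (2 * m + 1) = C ^ m * C ^ (m + 1) by ring,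
            ENNReal.ofReal_mul (by positivity)]
          ring
  have hsqrt : C * √(C ^ (2 * m + 1)) = C ^ m * (C * √C) := by
    rw [show C ^ (2 * m + 1) = (C ^ m) ^ 2 * C by ring, Real.sqrt_mul (by positivity),
      Real.sqrt_sq (by positivity)]
    ring
  calc p x y s ≤ ENNReal.ofReal (C * Real.exp (-(dist x y ^ 2) / (C * s))) *
        (A * B) ^ (-(1 : ℝ) / 2) := hup x y s hs
    _ ≤ ENNReal.ofReal C * (ENNReal.ofReal (√(C ^ (2 * m + 1))) * X⁻¹) := by
        gcongr
        refine mul_le_of_le_one_right hC.le (Real.exp_le_one_iff.2 ?_)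
        rw [neg_div, neg_nonpos]
        positivity
    _ = ENNReal.ofReal (C ^ m * (C * √C)) / X := by
        rw [← mul_assoc, ← ENNReal.ofReal_mul hC.le, hsqrt, div_eq_mul_inv]

lemma LiYauUpperBound.le_mul_of_liYauLowerBound (hup : LiYauUpperBound μ p C)
    (hlow : LiYauLowerBound μ p C) (hdbl : VolumeDoubling μ C) (hC : 0 < C)
    {s T : ℝ} (hs : 0 < s) (hT : 0 < T) {q : ℕ} (hq : √T ≤ 2 ^ q * √s) {x y : M}
    (hd : C * dist x y ^ 2 ≤ T) :
    p x y s ≤ ENNReal.ofReal (C ^ (q + 2) * Real.exp 1 *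
      Real.exp (-(dist x y ^ 2) / (C * s))) * p x y T := by
  set E := Real.exp (-(dist x y ^ 2) / (C * s))
  calc p x y s ≤ ENNReal.ofReal (C * E) * (μ (ball x √s) * μ (ball y √s)) ^ (-(1 : ℝ) / 2) :=
        hup x y s hs
    _ ≤ ENNReal.ofReal (C * E) * (ENNReal.ofReal (C ^ q) *
          (ENNReal.ofReal (C * Real.exp 1) * p x y T)) := by
        gcongr
        exact (hdbl.rpow_neg_half_le hC hs hq x y).trans
          (by gcongr; exact hlow.rpow_neg_half_le hC hT hd)
    _ = ENNReal.ofReal (C ^ (q + 2) * Real.exp 1 * E) * p x y T := by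
        rw [← mul_assoc, ← mul_assoc, ← ENNReal.ofReal_mul (by positivity),
          ← ENNReal.ofReal_mul (by positivity)]
        congr 2
        ring

end LiYau

section HeatLoss

variable {M : Type*} [MeasurableSpace M]

def IsSymmetricKernel (p : M → M → ℝ → ℝ≥0∞) : Prop :=
  ∀ x y : M, ∀ t : ℝ, 0 < t → p x y t = p y x t

def ChapmanKolmogorov (μ : Measure M) (p : M → M → ℝ → ℝ≥0∞) : Prop :=
  ∀ x y : M, ∀ s t : ℝ, 0 < s → 0 < t → p x y (s + t) = ∫⁻ z, p x z s * p z y t ∂μ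

def StochasticallyComplete (μ : Measure M) (p : M → M → ℝ → ℝ≥0∞) : Prop :=
  ∀ x : M, ∀ t : ℝ, 0 < t → ∫⁻ y, p x y t ∂μ = 1

noncomputable def heatLoss (μ : Measure M) (p : M → M → ℝ → ℝ≥0∞) (Ω : Set M) (t : ℝ) :
    ℝ≥0∞ :=
  ∫⁻ x in Ω, ∫⁻ y in Ωᶜ, p x y t ∂μ ∂μ

variable {μ : Measure M} {p : M → M → ℝ → ℝ≥0∞} {Ω : Set M}

lemma measurable_kernel_slice (hp : Measurable fun q : M × M × ℝ => p q.1 q.2.1 q.2.2)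
    (t : ℝ) : Measurable fun q : M × M => p q.1 q.2 t :=
  hp.comp (measurable_fst.prodMk (measurable_snd.prodMk measurable_const))

lemma measurable_setLIntegral_kernel [SFinite μ]
    (hp : Measurable fun q : M × M × ℝ => p q.1 q.2.1 q.2.2) (S : Set M) (t : ℝ) :
    Measurable fun x => ∫⁻ y in S, p x y t ∂μ :=
  (measurable_kernel_slice hp t).lintegral_prod_right'

lemma heatContent_add_heatLoss [SFinite μ]
    (hp : Measurable fun q : M × M × ℝ => p q.1 q.2.1 q.2.2) (hsc : StochasticallyComplete μ p)
    (hΩ : MeasurableSet Ω) {t : ℝ} (ht : 0 < t) :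
    ∫⁻ x in Ω, ∫⁻ y in Ω, p x y t ∂μ ∂μ + heatLoss μ p Ω t = μ Ω := by
  rw [heatLoss, ← lintegral_add_left (measurable_setLIntegral_kernel hp Ω t)]
  simp_rw [lintegral_add_compl _ hΩ, hsc _ t ht, setLIntegral_one]

lemma heatLoss_le_measure (hsc : StochasticallyComplete μ p) {t : ℝ} (ht : 0 < t) :
    heatLoss μ p Ω t ≤ μ Ω :=
  calc heatLoss μ p Ω t ≤ ∫⁻ _ in Ω, 1 ∂μ :=
        lintegral_mono fun x => (setLIntegral_le_lintegral _ _).trans (hsc x t ht).le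
    _ = μ Ω := setLIntegral_one Ω

lemma ChapmanKolmogorov.setLIntegral_compl_eq [SFinite μ] (hsemi : ChapmanKolmogorov μ p)
    (hp : Measurable fun q : M × M × ℝ => p q.1 q.2.1 q.2.2) (hΩ : MeasurableSet Ω)
    {a b : ℝ} (ha : 0 < a) (hb : 0 < b) (x : M) :
    ∫⁻ y in Ωᶜ, p x y (a + b) ∂μ
      = ∫⁻ z in Ω, p x z a * ∫⁻ y in Ωᶜ, p z y b ∂μ ∂μ +
        ∫⁻ z in Ωᶜ, p x z a * ∫⁻ y in Ωᶜ, p z y b ∂μ ∂μ := by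
  have hmeas : Measurable fun q : M × M => p x q.2 a * p q.2 q.1 b :=
    ((measurable_kernel_slice hp a).comp (measurable_const.prodMk measurable_snd)).mul
      ((measurable_kernel_slice hp b).comp measurable_swap)
  have hswap : ∀ S : Set M, ∫⁻ y in Ωᶜ, ∫⁻ z in S, p x z a * p z y b ∂μ ∂μ
      = ∫⁻ z in S, p x z a * ∫⁻ y in Ωᶜ, p z y b ∂μ ∂μ := fun S => by
    rw [lintegral_lintegral_swap hmeas.aemeasurable]
    exact lintegral_congr fun z => lintegral_const_mul _
      ((measurable_kernel_slice hp b).comp (measurable_const.prodMk measurable_id))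
  rw [lintegral_congr fun y => by rw [hsemi x y a b ha hb, ← lintegral_add_compl _ hΩ],
    lintegral_add_left hmeas.lintegral_prod_right', hswap, hswap]

/-- In the Chapman–Kolmogorov integral over the intermediate point `z`, the path leaves `Ω`
during the second leg if `z ∈ Ω` and during the first leg otherwise. -/
lemma heatLoss_add_le [SFinite μ] (hp : Measurable fun q : M × M × ℝ => p q.1 q.2.1 q.2.2)
    (hsymm : IsSymmetricKernel p) (hsemi : ChapmanKolmogorov μ p)
    (hsc : StochasticallyComplete μ p) (hΩ : MeasurableSet Ω) {a b : ℝ} (ha : 0 < a)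
    (hb : 0 < b) : heatLoss μ p Ω (a + b) ≤ heatLoss μ p Ω a + heatLoss μ p Ω b := by
  set g : M → ℝ≥0∞ := fun z => ∫⁻ y in Ωᶜ, p z y b ∂μ
  have hpa : Measurable fun q : M × M => p q.1 q.2 a * g q.2 :=
    (measurable_kernel_slice hp a).mul
      ((measurable_setLIntegral_kernel hp Ωᶜ b).comp measurable_snd)
  have hinside : ∫⁻ x in Ω, ∫⁻ z in Ω, p x z a * g z ∂μ ∂μ ≤ heatLoss μ p Ω b := by
    rw [lintegral_lintegral_swap hpa.aemeasurable]
    refine lintegral_mono fun z => ?_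
    have hcol : Measurable fun x => p x z a :=
      (measurable_kernel_slice hp a).comp (measurable_id.prodMk measurable_const)
    rw [lintegral_mul_const _ hcol]
    refine mul_le_of_le_one_left' ((setLIntegral_le_lintegral _ _).trans (le_of_eq ?_))
    rw [lintegral_congr fun x => hsymm x z a ha]
    exact hsc z a ha
  have houtside : ∫⁻ x in Ω, ∫⁻ z in Ωᶜ, p x z a * g z ∂μ ∂μ ≤ heatLoss μ p Ω a :=
    lintegral_mono fun x => lintegral_mono fun z =>
      mul_le_of_le_one_right' ((setLIntegral_le_lintegral _ _).trans (hsc z b hb).le)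
  calc heatLoss μ p Ω (a + b)
      = ∫⁻ x in Ω, ∫⁻ z in Ω, p x z a * g z ∂μ ∂μ +
          ∫⁻ x in Ω, ∫⁻ z in Ωᶜ, p x z a * g z ∂μ ∂μ := by
        rw [heatLoss, lintegral_congr (hsemi.setLIntegral_compl_eq hp hΩ ha hb),
          lintegral_add_left hpa.lintegral_prod_right']
    _ ≤ heatLoss μ p Ω a + heatLoss μ p Ω b := by
        rw [add_comm (heatLoss μ p Ω a)]
        exact add_le_add hinside houtside

lemma heatLoss_nat_mul_le [SFinite μ]
    (hp : Measurable fun q : M × M × ℝ => p q.1 q.2.1 q.2.2) (hsymm : IsSymmetricKernel p)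
    (hsemi : ChapmanKolmogorov μ p) (hsc : StochasticallyComplete μ p) (hΩ : MeasurableSet Ω)
    {k : ℕ} (hk : 0 < k) {t : ℝ} (ht : 0 < t) :
    heatLoss μ p Ω (k * t) ≤ k * heatLoss μ p Ω t := by
  induction k, hk using Nat.le_induction with
  | base => simp
  | succ k hk ih =>
    calc heatLoss μ p Ω ((k + 1 : ℕ) * t) = heatLoss μ p Ω (k * t + t) := by
          push_cast; ring_nf
      _ ≤ heatLoss μ p Ω (k * t) + heatLoss μ p Ω t :=
          heatLoss_add_le hp hsymm hsemi hsc hΩ (by positivity) ht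
      _ ≤ k * heatLoss μ p Ω t + heatLoss μ p Ω t := by gcongr
      _ = (k + 1 : ℕ) * heatLoss μ p Ω t := by push_cast; ring

lemma tsum_mul_heatLoss_le [SFinite μ] {C : ℝ}
    (hp : Measurable fun q : M × M × ℝ => p q.1 q.2.1 q.2.2) (hsymm : IsSymmetricKernel p)
    (hsemi : ChapmanKolmogorov μ p) (hsc : StochasticallyComplete μ p) (hΩ : MeasurableSet Ω)
    (hC : 0 < C) {t : ℝ} (ht : 0 < t) {n K m₂ : ℕ} (hK0 : 0 < K) (hK : (K : ℝ) ≤ 3 / 2 * C)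
    (hρ : 4 * C * Real.exp (-(n / C)) ≤ 1 / 2) :
    ∑' j, ENNReal.ofReal (C ^ (j + 3 + m₂) * Real.exp 1 * Real.exp (-(4 ^ j * n / C))) *
        heatLoss μ p Ω ((K * 4 ^ (j + 1) : ℕ) * t)
      ≤ ENNReal.ofReal (12 * Real.exp 1 * C ^ (4 + m₂) * Real.exp (-(n / C))) *
        heatLoss μ p Ω t := by
  set a := 6 * Real.exp 1 * C ^ (4 + m₂) * Real.exp (-(n / C))
  have ha : 0 ≤ a := by positivity
  have hterm : ∀ j : ℕ,
      ENNReal.ofReal (C ^ (j + 3 + m₂) * Real.exp 1 * Real.exp (-(4 ^ j * n / C))) *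
        heatLoss μ p Ω ((K * 4 ^ (j + 1) : ℕ) * t)
      ≤ ENNReal.ofReal a * 2⁻¹ ^ j * heatLoss μ p Ω t := fun j =>
    calc ENNReal.ofReal (C ^ (j + 3 + m₂) * Real.exp 1 * Real.exp (-(4 ^ j * n / C))) *
          heatLoss μ p Ω ((K * 4 ^ (j + 1) : ℕ) * t)
        ≤ ENNReal.ofReal (C ^ (j + 3 + m₂) * Real.exp 1 * Real.exp (-(4 ^ j * n / C))) *
          ((K * 4 ^ (j + 1) : ℕ) * heatLoss μ p Ω t) := by
          gcongr
          exact heatLoss_nat_mul_le hp hsymm hsemi hsc hΩ (by positivity) ht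
      _ = ENNReal.ofReal (C ^ (j + 3 + m₂) * Real.exp 1 * Real.exp (-(4 ^ j * n / C)) *
            (K * 4 ^ (j + 1))) * heatLoss μ p Ω t := by
          rw [← mul_assoc, ← ENNReal.ofReal_natCast, ← ENNReal.ofReal_mul (by positivity)]
          push_cast
          rfl
      _ ≤ ENNReal.ofReal (a * (1 / 2) ^ j) * heatLoss μ p Ω t := by
          gcongr ENNReal.ofReal ?_ * _
          exact annulus_coeff_le_geometric hC hK (by positivity) hρ m₂ j
      _ = ENNReal.ofReal a * 2⁻¹ ^ j * heatLoss μ p Ω t := by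
          rw [ENNReal.ofReal_mul ha, ENNReal.ofReal_pow (by norm_num), one_div,
            ENNReal.ofReal_inv_of_pos two_pos, ENNReal.ofReal_ofNat]
  refine (ENNReal.tsum_le_tsum hterm).trans (le_of_eq ?_)
  rw [ENNReal.tsum_mul_right, ENNReal.tsum_mul_left, ENNReal.tsum_geometric,
    ENNReal.one_sub_inv_two, inv_inv, ← ENNReal.ofReal_ofNat 2, ← ENNReal.ofReal_mul ha]
  congr 2
  ring

end HeatLoss

section ExteriorBallRatio

variable {M : Type*} [MetricSpace M] [MeasurableSpace M]
  {μ : Measure M} {p : M → M → ℝ → ℝ≥0∞} {Ω : Set M} {C : ℝ}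

noncomputable def exteriorBallRatioIntegral (μ : Measure M) (Ω : Set M) (r : ℝ) : ℝ≥0∞ :=
  ∫⁻ x in Ω, μ (ball x r \ Ω) / μ (ball x r) ∂μ

lemma setLIntegral_ball_inter_compl_le {x : M} {s r : ℝ} {k : ℝ≥0∞}
    (hnear : ∀ y, dist x y < r → p x y s ≤ k / μ (ball x r)) :
    ∫⁻ y in ball x r ∩ Ωᶜ, p x y s ∂μ ≤ k * (μ (ball x r \ Ω) / μ (ball x r)) :=
  calc ∫⁻ y in ball x r ∩ Ωᶜ, p x y s ∂μ ≤ ∫⁻ _ in ball x r ∩ Ωᶜ, k / μ (ball x r) ∂μ :=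
        setLIntegral_mono measurable_const fun y hy => hnear y (mem_ball'.1 hy.1)
    _ = k * (μ (ball x r \ Ω) / μ (ball x r)) := by
        rw [setLIntegral_const, Set.sdiff_eq, div_eq_mul_inv, div_eq_mul_inv]
        ring

lemma le_heatLoss_of_liYauLowerBound (hp : Measurable fun q : M × M × ℝ => p q.1 q.2.1 q.2.2)
    (hlow : LiYauLowerBound μ p C) (hdbl : VolumeDoubling μ C) (hC : 1 ≤ C) {t : ℝ}
    (ht : 0 < t) :
    ENNReal.ofReal (C ^ (-2 : ℝ) * Real.exp (-C)) * exteriorBallRatioIntegral μ Ω √t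
      ≤ heatLoss μ p Ω t := by
  set c := ENNReal.ofReal (C ^ (-2 : ℝ) * Real.exp (-C))
  rw [exteriorBallRatioIntegral, ← lintegral_const_mul' _ _ ENNReal.ofReal_ne_top]
  refine lintegral_mono fun x => ?_
  calc c * (μ (ball x √t \ Ω) / μ (ball x √t))
      = ∫⁻ _ in ball x √t ∩ Ωᶜ, c / μ (ball x √t) ∂μ := by
        rw [setLIntegral_const, Set.sdiff_eq, div_eq_mul_inv, div_eq_mul_inv]
        ring
    _ ≤ ∫⁻ y in ball x √t ∩ Ωᶜ, p x y t ∂μ :=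
        setLIntegral_mono ((measurable_kernel_slice hp t).comp
          (measurable_const.prodMk measurable_id)) fun y hy =>
          hlow.div_measure_ball_le hdbl hC ht (mem_ball'.1 hy.1)
    _ ≤ ∫⁻ y in Ωᶜ, p x y t ∂μ := lintegral_mono_set Set.inter_subset_right

lemma setLIntegral_compl_ball_inter_compl_le [OpensMeasurableSpace M]
    (hp : Measurable fun q : M × M × ℝ => p q.1 q.2.1 q.2.2) {x : M} {s r : ℝ} (hr : 0 < r)
    {c : ℕ → ℝ≥0∞} {T : ℕ → ℝ}
    (hfar : ∀ j y, 2 ^ j * r ≤ dist x y → dist x y < 2 ^ (j + 1) * r →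
      p x y s ≤ c j * p x y (T j)) :
    ∫⁻ y in (ball x r)ᶜ ∩ Ωᶜ, p x y s ∂μ ≤ ∑' j, c j * ∫⁻ y in Ωᶜ, p x y (T j) ∂μ := by
  have hrow : ∀ t, Measurable fun y => p x y t := fun t =>
    (measurable_kernel_slice hp t).comp (measurable_const.prodMk measurable_id)
  set A : ℕ → Set M := fun j => (ball x (2 ^ (j + 1) * r) \ ball x (2 ^ j * r)) ∩ Ωᶜ
  have hA : ∀ j, ∫⁻ y in A j, p x y s ∂μ ≤ c j * ∫⁻ y in Ωᶜ, p x y (T j) ∂μ := fun j =>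
    calc ∫⁻ y in A j, p x y s ∂μ ≤ ∫⁻ y in A j, c j * p x y (T j) ∂μ :=
          setLIntegral_mono ((hrow _).const_mul _) fun y hy =>
            hfar j y (not_lt.1 fun h => hy.1.2 (mem_ball'.2 h)) (mem_ball'.1 hy.1.1)
      _ = c j * ∫⁻ y in A j, p x y (T j) ∂μ := lintegral_const_mul _ (hrow _)
      _ ≤ c j * ∫⁻ y in Ωᶜ, p x y (T j) ∂μ := by
          gcongr
          exact Set.inter_subset_right
  calc ∫⁻ y in (ball x r)ᶜ ∩ Ωᶜ, p x y s ∂μ ≤ ∫⁻ y in ⋃ j, A j, p x y s ∂μ :=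
        lintegral_mono_set (by
          rw [← Set.iUnion_inter]
          exact Set.inter_subset_inter_left _ (compl_ball_subset_iUnion_annulus x hr))
    _ ≤ ∑' j, ∫⁻ y in A j, p x y s ∂μ := lintegral_iUnion_le _ _
    _ ≤ ∑' j, c j * ∫⁻ y in Ωᶜ, p x y (T j) ∂μ := ENNReal.tsum_le_tsum hA

lemma heatLoss_le_of_near_far [SFinite μ] [OpensMeasurableSpace M]
    (hp : Measurable fun q : M × M × ℝ => p q.1 q.2.1 q.2.2) {s r : ℝ} (hr : 0 < r)
    {k : ℝ≥0∞} (hk : k ≠ ⊤) {c : ℕ → ℝ≥0∞} {T : ℕ → ℝ}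
    (hnear : ∀ x y, dist x y < r → p x y s ≤ k / μ (ball x r))
    (hfar : ∀ j x y, 2 ^ j * r ≤ dist x y → dist x y < 2 ^ (j + 1) * r →
      p x y s ≤ c j * p x y (T j)) :
    heatLoss μ p Ω s ≤
      k * exteriorBallRatioIntegral μ Ω r + ∑' j, c j * heatLoss μ p Ω (T j) := by
  have hsplit : ∀ x, ∫⁻ y in Ωᶜ, p x y s ∂μ
      = ∫⁻ y in ball x r ∩ Ωᶜ, p x y s ∂μ + ∫⁻ y in (ball x r)ᶜ ∩ Ωᶜ, p x y s ∂μ := fun x => by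
    rw [← Measure.restrict_restrict measurableSet_ball,
      ← Measure.restrict_restrict measurableSet_ball.compl]
    exact (lintegral_add_compl _ measurableSet_ball).symm
  have hfarMeas : ∀ j, Measurable fun x => c j * ∫⁻ y in Ωᶜ, p x y (T j) ∂μ := fun j =>
    (measurable_setLIntegral_kernel hp _ _).const_mul _
  calc heatLoss μ p Ω s
      ≤ ∫⁻ x in Ω, (k * (μ (ball x r \ Ω) / μ (ball x r)) +
          ∑' j, c j * ∫⁻ y in Ωᶜ, p x y (T j) ∂μ) ∂μ := by
        refine lintegral_mono fun x => ?_
        rw [hsplit]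
        exact add_le_add (setLIntegral_ball_inter_compl_le (hnear x))
          (setLIntegral_compl_ball_inter_compl_le hp hr fun j => hfar j x)
    _ = k * exteriorBallRatioIntegral μ Ω r + ∑' j, c j * heatLoss μ p Ω (T j) := by
        rw [lintegral_add_right _ (Measurable.tsum hfarMeas), lintegral_const_mul' _ _ hk,
          lintegral_tsum fun j => (hfarMeas j).aemeasurable]
        congr 1
        exact tsum_congr fun j => lintegral_const_mul _ (measurable_setLIntegral_kernel hp _ _)

lemma heatLoss_div_le_of_liYau [SFinite μ] [OpensMeasurableSpace M]
    (hp : Measurable fun q : M × M × ℝ => p q.1 q.2.1 q.2.2)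
    (hup : LiYauUpperBound μ p C) (hlow : LiYauLowerBound μ p C) (hdbl : VolumeDoubling μ C)
    (hC : 0 < C) {t : ℝ} (ht : 0 < t) {n K m m₂ : ℕ} (hn : 0 < n) (hK : C ≤ K)
    (hm : (n : ℝ) ≤ 4 ^ m) (hm₂ : (K * n : ℝ) ≤ 4 ^ m₂) :
    heatLoss μ p Ω (t / n) ≤
      ENNReal.ofReal (C ^ m * (C * √C)) * exteriorBallRatioIntegral μ Ω √t +
        ∑' j, ENNReal.ofReal (C ^ (j + 3 + m₂) * Real.exp 1 * Real.exp (-(4 ^ j * n / C))) *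
          heatLoss μ p Ω ((K * 4 ^ (j + 1) : ℕ) * t) := by
  have hn' : (0 : ℝ) < n := Nat.cast_pos.2 hn
  set s := t / n
  have hs : 0 < s := by positivity
  have hts : t = n * s := by simp only [s]; field_simp
  have hsq : ∀ k : ℕ, (2 ^ k * √t) ^ 2 = 4 ^ k * t := fun k => by
    rw [mul_pow, Real.sq_sqrt ht.le, ← pow_mul, mul_comm k, pow_mul]; norm_num
  refine heatLoss_le_of_near_far hp (Real.sqrt_pos.2 ht) ENNReal.ofReal_ne_top
    (fun x y hxy => hup.le_div_measure_ball hdbl hC hs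
      (Real.sqrt_le_two_pow_mul_sqrt (by rw [hts]; gcongr)) hxy) fun j x y hlo hhi => ?_
  have hT : 0 < ((K * 4 ^ (j + 1) : ℕ) : ℝ) * t := by
    have : 0 < K := by exact_mod_cast hC.trans_le hK
    positivity
  have hq : √(((K * 4 ^ (j + 1) : ℕ) : ℝ) * t) ≤ 2 ^ (j + 1 + m₂) * √s := by
    refine Real.sqrt_le_two_pow_mul_sqrt ?_
    calc ((K * 4 ^ (j + 1) : ℕ) : ℝ) * t = 4 ^ (j + 1) * (K * n) * s := by
          rw [hts]; push_cast; ring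
      _ ≤ 4 ^ (j + 1) * 4 ^ m₂ * s := by gcongr
      _ = 4 ^ (j + 1 + m₂) * s := by ring
  have hd : C * dist x y ^ 2 ≤ ((K * 4 ^ (j + 1) : ℕ) : ℝ) * t := by
    have : dist x y ^ 2 ≤ 4 ^ (j + 1) * t :=
      hsq (j + 1) ▸ pow_le_pow_left₀ dist_nonneg hhi.le 2
    push_cast
    nlinarith [pow_pos (by norm_num : (0 : ℝ) < 4) (j + 1)]
  refine (hup.le_mul_of_liYauLowerBound hlow hdbl hC hs hT hq hd).trans ?_
  gcongr ENNReal.ofReal (?_ * _ * ?_) * _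
  · exact le_of_eq (by ring_nf)
  · rw [Real.exp_le_exp, neg_div, neg_le_neg_iff, div_le_div_iff₀ hC (by positivity),
      show (4 : ℝ) ^ j * n * (C * s) = 4 ^ j * t * C by rw [hts]; ring]
    exact mul_le_mul_of_nonneg_right (hsq j ▸ pow_le_pow_left₀ (by positivity) hlo 2) hC.le

lemma heatLoss_le_add_half [SFinite μ] [OpensMeasurableSpace M]
    (hp : Measurable fun q : M × M × ℝ => p q.1 q.2.1 q.2.2) (hsymm : IsSymmetricKernel p)
    (hsemi : ChapmanKolmogorov μ p) (hsc : StochasticallyComplete μ p)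
    (hup : LiYauUpperBound μ p C) (hlow : LiYauLowerBound μ p C) (hdbl : VolumeDoubling μ C)
    (hΩ : MeasurableSet Ω) (hC : 0 < C) {t : ℝ} (ht : 0 < t) {n K m m₂ : ℕ} (hn : 0 < n)
    (hK : C ≤ K) (hK' : (K : ℝ) ≤ 3 / 2 * C) (hm : (n : ℝ) ≤ 4 ^ m)
    (hm₂ : (K * n : ℝ) ≤ 4 ^ m₂) (hρ : 4 * C * Real.exp (-(n / C)) ≤ 1 / 2)
    (hgeom : 12 * Real.exp 1 * n * C ^ (4 + m₂) * Real.exp (-(n / C)) ≤ 1 / 2) :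
    heatLoss μ p Ω t ≤ ENNReal.ofReal (n * (C ^ m * (C * √C))) *
      exteriorBallRatioIntegral μ Ω √t + 2⁻¹ * heatLoss μ p Ω t :=
  calc heatLoss μ p Ω t = heatLoss μ p Ω (n * (t / n)) := by
        rw [mul_div_cancel₀ _ (by positivity)]
    _ ≤ n * heatLoss μ p Ω (t / n) :=
        heatLoss_nat_mul_le hp hsymm hsemi hsc hΩ hn (by positivity)
    _ ≤ n * (ENNReal.ofReal (C ^ m * (C * √C)) * exteriorBallRatioIntegral μ Ω √t +
          ENNReal.ofReal (12 * Real.exp 1 * C ^ (4 + m₂) * Real.exp (-(n / C))) *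
            heatLoss μ p Ω t) := by
        gcongr
        exact (heatLoss_div_le_of_liYau hp hup hlow hdbl hC ht hn hK hm hm₂).trans
          (add_le_add le_rfl
            (tsum_mul_heatLoss_le hp hsymm hsemi hsc hΩ hC ht
              (by exact_mod_cast hC.trans_le hK) hK' hρ))
    _ = ENNReal.ofReal (n * (C ^ m * (C * √C))) * exteriorBallRatioIntegral μ Ω √t +
          ENNReal.ofReal (12 * Real.exp 1 * n * C ^ (4 + m₂) * Real.exp (-(n / C))) *
            heatLoss μ p Ω t := by
        rw [mul_add, ← mul_assoc (n : ℝ≥0∞), ← mul_assoc (n : ℝ≥0∞),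
          ← ENNReal.ofReal_natCast, ← ENNReal.ofReal_mul (by positivity),
          ← ENNReal.ofReal_mul (by positivity)]
        congr 3
        ring
    _ ≤ _ := by
        gcongr
        rw [← ENNReal.ofReal_ofNat 2, ← ENNReal.ofReal_inv_of_pos two_pos]
        exact ENNReal.ofReal_le_ofReal (by linarith)

lemma heatLoss_le_heatLossUpperConstant_mul [SFinite μ] [OpensMeasurableSpace M]
    (hp : Measurable fun q : M × M × ℝ => p q.1 q.2.1 q.2.2) (hsymm : IsSymmetricKernel p)
    (hsemi : ChapmanKolmogorov μ p) (hsc : StochasticallyComplete μ p)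
    (hup : LiYauUpperBound μ p C) (hlow : LiYauLowerBound μ p C) (hdbl : VolumeDoubling μ C)
    (hΩ : MeasurableSet Ω) (hC : 2 ≤ C) {t : ℝ} (ht : 0 < t)
    (hfin : heatLoss μ p Ω t ≠ ⊤) :
    heatLoss μ p Ω t ≤
      ENNReal.ofReal (heatLossUpperConstant C) * exteriorBallRatioIntegral μ Ω √t := by
  have hC0 : 0 < C := by linarith
  set n := ⌈3 * liYauScale C⌉₊
  have hn : 3 * liYauScale C ≤ n := Nat.le_ceil _
  have hn' : (n : ℝ) ≤ 3 * liYauScale C + 1 :=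
    (Nat.ceil_lt_add_one (by linarith [eight_le_liYauScale hC])).le
  have hn0 : 0 < n := by exact_mod_cast (by linarith [eight_le_liYauScale hC] : (0 : ℝ) < n)
  set K := ⌈C⌉₊
  have hK' : (K : ℝ) ≤ 3 / 2 * C := by linarith [Nat.ceil_lt_add_one hC0.le]
  obtain ⟨m, hm, hm'⟩ := exists_le_four_pow (k := n) (by exact_mod_cast hn0)
  obtain ⟨m₂, hm₂, hm₂'⟩ := exists_le_four_pow (k := 3 / 2 * C * n)
    (by nlinarith [(by exact_mod_cast hn0 : (1 : ℝ) ≤ n)])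
  have hhalf := heatLoss_le_add_half hp hsymm hsemi hsc hup hlow hdbl hΩ hC0 ht hn0
    (Nat.le_ceil C) hK' hm (le_trans (by gcongr) hm₂) (four_mul_exp_neg_le_half hC hn)
    (twelve_mul_exp_neg_le_half hC hn hn' hm₂')
  calc heatLoss μ p Ω t
      ≤ 2 * (ENNReal.ofReal (n * (C ^ m * (C * √C))) * exteriorBallRatioIntegral μ Ω √t) :=
        ENNReal.le_two_mul_of_le_add_half hfin hhalf
    _ = ENNReal.ofReal (2 * n * (C ^ m * (C * √C))) * exteriorBallRatioIntegral μ Ω √t := by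
        rw [← mul_assoc, ← ENNReal.ofReal_ofNat 2, ← ENNReal.ofReal_mul (by norm_num),
          mul_assoc]
    _ ≤ _ := by
        gcongr ENNReal.ofReal ?_ * _
        exact two_mul_le_heatLossUpperConstant hC (by positivity) hn' hm'

end ExteriorBallRatio

/-- Theorem 2: under the Li–Yau bound and volume doubling, for an open set `Ω` of finite
measure the heat loss `F_Ω(t) = μ(Ω) - H_Ω(t)` is bounded above and below by constant
multiples of `∫_Ω μ(B(x;√t) \ Ω)/μ(B(x;√t)) dμ(x)`, with `L₁ = C⁻² e^{-C}` and
`L₂ = 4 C^{15/4} (C log(2 C^{7 + log C/log 2}))^{1 + 3 log C/(4 log 2)}`. -/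
theorem heat_loss_two_sided_bounds
    {M : Type*} [MetricSpace M] [MeasurableSpace M] [BorelSpace M]
    (μ : Measure M)
    (hball : ∀ x : M, ∀ R : ℝ, 0 < R → 0 < μ (ball x R) ∧ μ (ball x R) < ⊤)
    (p : M → M → ℝ → ℝ≥0∞)
    (hp_meas : Measurable fun q : M × M × ℝ => p q.1 q.2.1 q.2.2)
    (hp_symm : ∀ x y : M, ∀ t : ℝ, 0 < t → p x y t = p y x t)
    (hp_semi : ∀ x y : M, ∀ s t : ℝ, 0 < s → 0 < t →
      p x y (s + t) = ∫⁻ z, p x z s * p z y t ∂μ)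
    (hp_sc : ∀ x : M, ∀ t : ℝ, 0 < t → ∫⁻ y, p x y t ∂μ = 1)
    (C : ℝ) (hC : 2 ≤ C)
    (hLY_lower : ∀ x y : M, ∀ t : ℝ, 0 < t →
      ENNReal.ofReal (C⁻¹ * Real.exp (-(C * dist x y ^ 2) / t)) *
        (μ (ball x (Real.sqrt t)) * μ (ball y (Real.sqrt t))) ^ (-(1 : ℝ) / 2)
        ≤ p x y t)
    (hLY_upper : ∀ x y : M, ∀ t : ℝ, 0 < t →
      p x y t ≤ ENNReal.ofReal (C * Real.exp (-(dist x y ^ 2) / (C * t))) *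
        (μ (ball x (Real.sqrt t)) * μ (ball y (Real.sqrt t))) ^ (-(1 : ℝ) / 2))
    (hdbl : ∀ x : M, ∀ R : ℝ, 0 < R →
      μ (ball x (2 * R)) ≤ ENNReal.ofReal C * μ (ball x R))
    (Ω : Set M) (hΩ : IsOpen Ω) (hΩfin : μ Ω < ⊤)
    (H : ℝ → ℝ≥0∞)
    (hH : ∀ t : ℝ, H t = ∫⁻ x in Ω, ∫⁻ y in Ω, p x y t ∂μ ∂μ)
    (F : ℝ → ℝ≥0∞)
    (hF : ∀ t : ℝ, F t = μ Ω - H t) :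
    ∀ t : ℝ, 0 < t →
      ENNReal.ofReal (C ^ (-2 : ℝ) * Real.exp (-C)) *
          (∫⁻ x in Ω, μ (ball x (Real.sqrt t) \ Ω) / μ (ball x (Real.sqrt t)) ∂μ)
        ≤ F t ∧
      F t ≤
        ENNReal.ofReal (4 * C ^ ((15 : ℝ) / 4) *
            (C * Real.log (2 * C ^ ((7 : ℝ) + Real.log C / Real.log 2))) ^
              (1 + 3 * Real.log C / (4 * Real.log 2))) *
          (∫⁻ x in Ω, μ (ball x (Real.sqrt t) \ Ω) / μ (ball x (Real.sqrt t)) ∂μ) := by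
  intro t ht
  have hΩm : MeasurableSet Ω := hΩ.measurableSet
  have : SigmaFinite μ := sigmaFinite_of_measure_ball_lt_top fun x R hR => (hball x R hR).2
  have hcontent := heatContent_add_heatLoss hp_meas hp_sc hΩm ht
  have hHfin : H t ≠ ⊤ := by
    rw [hH]; exact ne_top_of_le_ne_top hΩfin.ne (hcontent ▸ le_self_add)
  rw [hF, ← hcontent, ← hH t, ENNReal.add_sub_cancel_left hHfin]
  exact ⟨le_heatLoss_of_liYauLowerBound hp_meas hLY_lower hdbl (by linarith) ht,
    heatLoss_le_heatLossUpperConstant_mul hp_meas hp_symm hp_semi hp_sc hLY_upper hLY_lower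
      hdbl hΩm hC ht (ne_top_of_le_ne_top hΩfin.ne (heatLoss_le_measure hp_sc ht))⟩
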